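/- Let R → S → T be surjective homomorphisms of commutative noetherian local rings. If both R → S and S → T are complete intersection (each kernel generated by a regular sequence), then the composite R → T is complete intersection. -/

import Mathlib

open RingTheory.Sequence


/-!
STATEMENT 16: If `R → S` and `S → T` are surjective complete intersection
homomorphisms of commutative noetherian local rings (kernels generated by
regular sequences), then the composite `R → T` is complete intersection.
-/

/-- A surjective homomorphism of local rings is complete intersection if its kernel
is generated by a regular sequence. -/
def RingHom.IsCompleteIntersection {R S : Type} [CommRing R] [CommRing S]
    (φ : R →+* S) : Prop :=
  ∃ rs : List R, RingTheory.Sequence.IsRegular R rs ∧ Ideal.ofList rs = RingHom.ker φ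

theorem composite_of_complete_intersections_is_complete_intersection
    (R S T : Type) [CommRing R] [CommRing S] [CommRing T]
    [IsNoetherianRing R] [IsNoetherianRing S] [IsNoetherianRing T]
    [IsLocalRing R] [IsLocalRing S] [IsLocalRing T]
    (φ : R →+* S) (ψ : S →+* T)
    (hφs : Function.Surjective φ) (hψs : Function.Surjective ψ)
    (hφ : φ.IsCompleteIntersection) (hψ : ψ.IsCompleteIntersection)
    (hφl : IsLocalHom φ) (hψl : IsLocalHom ψ) :
    (ψ.comp φ).IsCompleteIntersection := by
  obtain ⟨rs, hrs, hrsk⟩ := hφ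
  obtain ⟨ss, hss, hssk⟩ := hψ
  -- lift ss to R
  obtain ⟨ls, hls⟩ : ∃ ls : List R, ls.map φ = ss :=
    (List.map_surjective_iff.mpr hφs) ss
  refine ⟨rs ++ ls, ?_, ?_⟩
  · -- regularity
    have hsmul : (Ideal.ofList rs • ⊤ : Submodule R R) = Ideal.ofList rs := by
      rw [smul_eq_mul, Ideal.mul_top]
    -- AddEquiv from R ⧸ (ofList rs • ⊤) to S
    have hker : Ideal.ofList rs = RingHom.ker φ := hrsk
    let e₁ : (R ⧸ (Ideal.ofList rs • ⊤ : Submodule R R)) ≃ₗ[R] R ⧸ (RingHom.ker φ) :=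
      Submodule.quotEquivOfEq _ _ (hsmul.trans hker)
    let e₂ : (R ⧸ RingHom.ker φ) ≃+* S := RingHom.quotientKerEquivOfSurjective hφs
    let e : (R ⧸ (Ideal.ofList rs • ⊤ : Submodule R R)) ≃+ S :=
      e₁.toAddEquiv.trans e₂.toAddEquiv
    have he : ∀ r : R, ∀ x, e (r • x) = φ r • e x := by
      intro r x
      obtain ⟨y, rfl⟩ := Submodule.Quotient.mk_surjective _ x
      show e₂ (e₁ (r • Submodule.Quotient.mk y)) = φ r * e₂ (e₁ (Submodule.Quotient.mk y))
      rw [← Submodule.Quotient.mk_smul]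
      simp only [e₁, Submodule.quotEquivOfEq_mk]
      show e₂ (Ideal.Quotient.mk _ (r * y)) = φ r * e₂ (Ideal.Quotient.mk _ y)
      have : ∀ z : R, e₂ (Ideal.Quotient.mk _ z) = φ z := fun z => rfl
      rw [this, this, map_mul]
    have hwls : IsWeaklyRegular (R ⧸ (Ideal.ofList rs • ⊤ : Submodule R R)) ls := by
      rw [AddEquiv.isWeaklyRegular_congr (e := e) (bs := ls.map φ)
        (List.forall₂_map_right_iff.mpr (List.forall₂_same.mpr fun r _ => he r))]
      rw [hls]; exact hss.toIsWeaklyRegular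
    constructor
    · rw [isWeaklyRegular_append_iff]
      exact ⟨hrs.toIsWeaklyRegular, hwls⟩
    · -- ⊤ ≠ ofList (rs++ls) • ⊤
      intro h
      rw [smul_eq_mul, Ideal.mul_top] at h
      have h1 : (1 : R) ∈ Ideal.ofList (rs ++ ls) := h ▸ Submodule.mem_top
      have hle : Ideal.ofList (rs ++ ls) ≤ RingHom.ker (ψ.comp φ) := by
        rw [Ideal.ofList_append, sup_le_iff]
        constructor
        · rw [hrsk]
          intro x hx
          simp only [RingHom.mem_ker, RingHom.comp_apply] at hx ⊢
          rw [hx, map_zero]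
        · intro x hx
          have : φ x ∈ Ideal.ofList ss := by
            rw [← hls, ← Ideal.map_ofList]
            exact Ideal.mem_map_of_mem φ hx
          rw [hssk] at this
          simpa [RingHom.mem_ker] using this
      exact RingHom.one_notMem_ker (ψ.comp φ) (hle h1)
  · -- kernel equality
    rw [Ideal.ofList_append, ← RingHom.comap_ker, ← hssk, ← hls, ← Ideal.map_ofList,
      Ideal.comap_map_of_surjective φ hφs, ← RingHom.ker_eq_comap_bot, ← hrsk, sup_comm]
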